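/- Let T be a set of (k+1)-element subsets of [n] with |T| = m3 and det ∂̂_{•,T} ≠ 0 (a ℚ-acyclic complex), with degree sequence d_i = d_i(T). Then for every x ∈ ℝⁿ with all coordinates nonzero, det(∂̂_{•,T})² ≤ (∏_{i∈[n]} (x_i²)^{m1−d_i}) · (Σ_{i∈[n]} x_i²)^{−m1} · ((Σ_{i∈[n]} d_i x_i²)/m3)^{m3}. -/

import Mathlib

open Matrix

/-- The `j`-element subsets of the vertex set `[n]` (modelled as `Fin n`). -/
abbrev Face (n j : ℕ) := {s : Finset (Fin n) // s.card = j}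

/-- The `j`-element subsets of `[n]` not containing the last vertex `n`
(the vertex of `Fin n` with value `n - 1`). -/
abbrev HFace (n j : ℕ) :=
  {s : Finset (Fin n) // s.card = j ∧ ∀ a ∈ s, (a : ℕ) < n - 1}

/-- The `k`-dimensional boundary matrix `∂`: rows indexed by `k`-subsets `σ`,
columns by `(k+1)`-subsets `τ`; the entry is `(-1)^m` if `σ = τ \ {τ_m}`
(where `τ = {τ_0 < ⋯ < τ_k}`), and `0` otherwise. -/
noncomputable def bdry (n k : ℕ) : Matrix (Face n k) (Face n (k+1)) ℝ :=
  fun σ τ => ∑ a ∈ τ.1,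
    if σ.1 = τ.1.erase a then (-1 : ℝ) ^ ((τ.1.filter (fun b => b < a)).card) else 0

/-- The submatrix `∂̂` of `∂` consisting of the rows indexed by `k`-subsets
not containing the vertex `n`. -/
noncomputable def bdryHat (n k : ℕ) : Matrix (HFace n k) (Face n (k+1)) ℝ :=
  fun σ τ => bdry n k ⟨σ.1, σ.2.1⟩ τ

/-- The submatrix `M_{•,T}` of `M` with columns restricted to `T`. -/
def colSub {ι κ : Type*} (M : Matrix ι κ ℝ) (T : Finset κ) :
    Matrix ι {τ // τ ∈ T} ℝ :=
  fun i t => M i t.1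

/- The squared determinant of a matrix whose row and column index types are in
bijection (`0` if there is no bijection); independent of the chosen bijection. -/
open scoped Classical in
noncomputable def detSq {ι κ : Type*} [Fintype ι] [DecidableEq ι] [Fintype κ]
    (M : Matrix ι κ ℝ) : ℝ :=
  if h : Nonempty (ι ≃ κ) then ((M.submatrix id h.some).det) ^ 2 else 0

/-- The degree `d_i(T)`: the number of members of `T` containing the vertex `i`. -/
def deg (n k : ℕ) (T : Finset (Face n (k+1))) (i : Fin n) : ℕ :=
  (T.filter (fun τ => i ∈ τ.1)).card

/-- The diagonal matrix `X_j` indexed by `j`-subsets, with entries `∏_{i∈σ} x_i`. -/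
noncomputable def Xdiag (n j : ℕ) (x : Fin n → ℝ) :
    Matrix (Face n j) (Face n j) ℝ :=
  Matrix.diagonal (fun σ => ∏ i ∈ σ.1, x i)

/-!
Weight the boundary matrix by `x`: `N = X⁻¹ ∂_{•,T} X` has entry `± x_a` at `(σ, σ ∪ {a})`. Its Gram
matrix `NᵀN` is positive semidefinite with trace `∑ᵢ dᵢ xᵢ²`, so AM–GM on its eigenvalues gives
`det (NᵀN) ≤ (∑ᵢ dᵢ xᵢ² / m₃) ^ m₃`.

On the other hand, `∂∂ = 0` on the full simplex writes each row of `N` indexed by a face through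
the vertex `n` as a combination, through the weighted boundary `D` of the simplex on `[n-1]`, of
the rows of `N̂` (faces avoiding `n`). Hence `NᵀN = N̂ᵀ (1 + x_n⁻² DᵀD) N̂`. The Laplacian identity
`DᵀD + D'D'ᵀ = (∑_{i<n} xᵢ²) • 1` makes `DDᵀ` equal to `∑_{i<n} xᵢ²` times a projection of rank
`m₁`, so `det (1 + x_n⁻² DᵀD) = (∑ᵢ xᵢ² / x_n²) ^ m₁`. Finally `det N̂` and `det ∂̂_{•,T}` differ by
the monomial `∏ᵢ xᵢ^{dᵢ} / ∏_{i<n} xᵢ^{m₁}`.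
-/

open Finset

namespace Finset

@[to_additive]
lemma prod_prod_eq_prod_pow_card_filter {ι β M : Type*} [CommMonoid M] [DecidableEq β]
    {F : Finset ι} {U : Finset β} {g : ι → Finset β} (hg : ∀ t ∈ F, g t ⊆ U) (f : β → M) :
    ∏ t ∈ F, ∏ i ∈ g t, f i = ∏ i ∈ U, f i ^ #{t ∈ F | i ∈ g t} := by
  rw [prod_comm' (t' := U) (s' := fun i => {t ∈ F | i ∈ g t})]
  · exact prod_congr rfl fun i _ => prod_const (f i)
  · intro t i
    simp only [mem_filter]
    exact ⟨fun h => ⟨⟨h.1, h.2⟩, hg t h.1 h.2⟩, fun h => h.1⟩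

lemma sum_powersetCard_succ_insert {α M : Type*} [DecidableEq α] [AddCommMonoid M]
    {V : Finset α} {a : α} (ha : a ∉ V) (j : ℕ) (f : Finset α → M) :
    ∑ σ ∈ (insert a V).powersetCard (j + 1), f σ =
      ∑ σ ∈ V.powersetCard (j + 1), f σ + ∑ ρ ∈ V.powersetCard j, f (insert a ρ) := by
  have hnot {ρ : Finset α} (hρ : ρ ∈ V.powersetCard j) : a ∉ ρ :=
    fun h => ha ((mem_powersetCard.1 hρ).1 h)
  rw [powersetCard_succ_insert ha, sum_union, sum_image]
  · exact fun ρ hρ ρ' hρ' h => by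
      rw [← erase_insert (hnot hρ), ← erase_insert (hnot hρ'), h]
  · refine disjoint_left.2 fun σ hσ hσ' => ?_
    obtain ⟨ρ, -, rfl⟩ := mem_image.1 hσ'
    exact ha ((mem_powersetCard.1 hσ).1 (mem_insert_self a ρ))

lemma card_filter_notMem_powersetCard {α : Type*} [DecidableEq α] (W : Finset α) (j : ℕ) {b : α}
    (hb : b ∈ W) :
    #{σ ∈ W.powersetCard j | b ∉ σ} = (#W - 1).choose j := by
  rw [← card_erase_of_mem hb, ← card_powersetCard]
  congr 1
  ext σ
  simp only [mem_filter, mem_powersetCard, subset_erase]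
  tauto

lemma card_filter_mem_powersetCard {α : Type*} [DecidableEq α] (W : Finset α) (j : ℕ) {b : α}
    (hb : b ∈ W) :
    #{σ ∈ W.powersetCard (j + 1) | b ∈ σ} = (#W - 1).choose j := by
  have h := card_filter_add_card_filter_not (s := W.powersetCard (j + 1)) (b ∈ ·)
  have hW : #W = #W - 1 + 1 := (Nat.succ_pred_eq_of_pos (card_pos.2 ⟨b, hb⟩)).symm
  rw [card_filter_notMem_powersetCard W (j + 1) hb, card_powersetCard, hW,
    Nat.choose_succ_succ', Nat.add_sub_cancel] at h
  omega

end Finset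

lemma Real.prod_le_sum_div_card_pow {ι : Type*} (s : Finset ι) (z : ι → ℝ)
    (hz : ∀ i ∈ s, 0 ≤ z i) : ∏ i ∈ s, z i ≤ ((∑ i ∈ s, z i) / #s) ^ #s := by
  rcases s.eq_empty_or_nonempty with rfl | hs
  · simp
  have hcard : (0 : ℝ) < #s := Nat.cast_pos.2 hs.card_pos
  have h := Real.geom_mean_le_arith_mean s (fun _ => 1) z (fun _ _ => zero_le_one)
    (by simpa using hcard) hz
  simp only [Real.rpow_one, sum_const, nsmul_eq_mul, mul_one, one_mul] at h
  calc ∏ i ∈ s, z i = ((∏ i ∈ s, z i) ^ ((#s : ℝ)⁻¹)) ^ #s :=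
        (Real.rpow_inv_natCast_pow (prod_nonneg hz) hs.card_pos.ne').symm
    _ ≤ ((∑ i ∈ s, z i) / #s) ^ #s :=
        pow_le_pow_left₀ (Real.rpow_nonneg (prod_nonneg hz) _) h _

namespace Matrix

variable {ι : Type*} [Fintype ι] [DecidableEq ι]

lemma det_transpose_mul_mul_self {κ : Type*} [Fintype κ] [DecidableEq κ] (M : Matrix ι κ ℝ)
    (B : Matrix ι ι ℝ) (e : ι ≃ κ) :
    (Mᵀ * B * M).det = B.det * (M.submatrix id e).det ^ 2 := by
  have h : Mᵀ * B * M = ((M.submatrix id e)ᵀ * B * M.submatrix id e).submatrix e.symm e.symm := by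
    ext c c'
    simp [mul_apply]
  rw [h, det_submatrix_equiv_self, det_mul, det_mul, det_transpose]
  ring

lemma det_mul_prod_eq_of_mul_eq {A B : Matrix ι ι ℝ} {u v : ι → ℝ} (h : ∀ i j, u i * A i j = B i j * v j) :
    A.det * ∏ i, u i = B.det * ∏ i, v i := by
  have hAB : diagonal u * A = B * diagonal v := by
    ext i j
    rw [diagonal_mul, mul_diagonal, h]
  have := congrArg det hAB
  rwa [det_mul, det_mul, det_diagonal, det_diagonal, mul_comm] at this

lemma IsHermitian.det_one_add {A : Matrix ι ι ℝ} (hA : A.IsHermitian) :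
    (1 + A).det = ∏ i, (1 + hA.eigenvalues i) := by
  have h := A.eval_charpoly (-1)
  rw [hA.charpoly_eq, Polynomial.eval_prod] at h
  simp only [Polynomial.eval_sub, Polynomial.eval_X, Polynomial.eval_C, RCLike.ofReal_real_eq_id,
    id_eq] at h
  rw [map_neg, map_one, ← neg_add', det_neg] at h
  rw [← mul_right_inj' (pow_ne_zero (Fintype.card ι) (neg_ne_zero.2 (one_ne_zero (α := ℝ)))), ← h,
    ← card_univ, ← prod_const, ← prod_mul_distrib]
  exact prod_congr rfl fun i _ => by ring

lemma IsHermitian.eigenvalues_mul_self {A : Matrix ι ι ℝ} (hA : A.IsHermitian) {s : ℝ}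
    (hAA : A * A = s • A) (i : ι) :
    hA.eigenvalues i * hA.eigenvalues i = s * hA.eigenvalues i := by
  set v := ⇑(hA.eigenvectorBasis i)
  have hv : v ≠ 0 := (WithLp.ofLp_eq_zero 2).ne.2 (hA.eigenvectorBasis.orthonormal.ne_zero i)
  have hAv : A *ᵥ v = hA.eigenvalues i • v := hA.mulVec_eigenvectorBasis i
  have h := congrArg (· *ᵥ v) hAA
  simp only [← mulVec_mulVec, hAv, mulVec_smul, smul_mulVec, smul_smul] at h
  exact smul_left_injective ℝ hv h

lemma IsHermitian.det_one_add_of_mul_self_eq_smul {A : Matrix ι ι ℝ} (hA : A.IsHermitian)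
    {s : ℝ} {r : ℕ} (hAA : A * A = s • A) (htr : A.trace = s * r) :
    (1 + A).det = (1 + s) ^ r := by
  set μ := hA.eigenvalues
  have hμ (i : ι) : μ i = 0 ∨ μ i = s := by
    have := hA.eigenvalues_mul_self hAA i
    rcases eq_or_ne (μ i) 0 with h | h
    · exact Or.inl h
    · exact Or.inr (mul_right_cancel₀ h this)
  set P : Finset ι := {i | μ i = s}
  have hprod : ∏ i, (1 + μ i) = (1 + s) ^ #P := by
    rw [← prod_filter_mul_prod_filter_not univ (μ · = s), prod_congr rfl fun i hi => by
      rw [(mem_filter.1 hi).2], prod_const, prod_eq_one fun i hi => by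
      rw [(hμ i).resolve_right (mem_filter.1 hi).2, add_zero], mul_one]
  have hsum : ∑ i, μ i = s * #P := by
    rw [← sum_filter_add_sum_filter_not univ (μ · = s), sum_congr rfl fun i hi => by
      rw [(mem_filter.1 hi).2], sum_const, sum_eq_zero fun i hi =>
      (hμ i).resolve_right (mem_filter.1 hi).2, add_zero, nsmul_eq_mul, mul_comm]
  rw [hA.det_one_add, hprod]
  rcases eq_or_ne s 0 with rfl | hs
  · simp
  · have htr' : A.trace = ∑ i, μ i := by simpa using hA.trace_eq_sum_eigenvalues
    rw [← htr', htr] at hsum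
    exact congrArg _ (by exact_mod_cast (mul_left_cancel₀ hs hsum).symm)

lemma PosSemidef.det_le_trace_div_pow {A : Matrix ι ι ℝ} (hA : A.PosSemidef) :
    A.det ≤ (A.trace / Fintype.card ι) ^ Fintype.card ι := by
  have htr : A.trace = ∑ i, hA.1.eigenvalues i := by simpa using hA.1.trace_eq_sum_eigenvalues
  rw [hA.1.det_eq_prod_eigenvalues, htr]
  simpa using Real.prod_le_sum_div_card_pow univ _ fun i _ => hA.eigenvalues_nonneg i

end Matrix

section WeightedBoundary

variable {α : Type*} [LinearOrder α]

noncomputable def faceSign (t : Finset α) (a : α) : ℝ := (-1) ^ #{b ∈ t | b < a}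

lemma faceSign_mul_self (t : Finset α) (a : α) : faceSign t a * faceSign t a = 1 := by
  rw [faceSign, ← pow_add, ← two_mul, pow_mul, neg_one_sq, one_pow]

lemma faceSign_insert {p : α} {s : Finset α} (hp : p ∉ s) (q : α) :
    faceSign (insert p s) q = (if p < q then -1 else 1) * faceSign s q := by
  unfold faceSign
  rw [filter_insert]
  split_ifs with h
  · rw [card_insert_of_notMem fun hc => hp (mem_filter.1 hc).1, pow_succ, mul_comm]
  · rw [one_mul]

lemma faceSign_insert_self (s : Finset α) (a : α) : faceSign (insert a s) a = faceSign s a := by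
  rw [faceSign, faceSign, filter_insert, if_neg (lt_irrefl a)]

lemma faceSign_insert_mul_faceSign_insert {p q : α} {s : Finset α} (hp : p ∉ s) (hq : q ∉ s)
    (hpq : p ≠ q) :
    faceSign (insert p s) q * faceSign (insert q s) p = -(faceSign s q * faceSign s p) := by
  rw [faceSign_insert hp, faceSign_insert hq]
  rcases hpq.lt_or_gt with h | h
  · rw [if_pos h, if_neg h.asymm]; ring
  · rw [if_neg h.asymm, if_pos h]; ring

lemma faceSign_mul_faceSign_insert_add {p q : α} {s : Finset α} (hp : p ∉ s) (hq : q ∉ s)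
    (hpq : p ≠ q) :
    faceSign s p * faceSign (insert p s) q + faceSign s q * faceSign (insert q s) p = 0 := by
  rw [faceSign_insert hp, faceSign_insert hq]
  rcases hpq.lt_or_gt with h | h
  · rw [if_pos h, if_neg h.asymm]; ring
  · rw [if_neg h.asymm, if_pos h]; ring

variable (x : α → ℝ)

/-- The `(s, t)` entry of `X⁻¹ ∂ X` with `X = diag (∏_{i ∈ σ} xᵢ)` (`Xdiag`): the boundary
coefficient of `s` in `t`, weighted by `x` at the removed vertex. -/
noncomputable def wbdry (s t : Finset α) : ℝ :=
  ∑ a ∈ t, if s = t.erase a then x a * faceSign t a else 0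

lemma wbdry_insert {a : α} {s : Finset α} (ha : a ∉ s) :
    wbdry x s (insert a s) = x a * faceSign s a := by
  rw [wbdry, sum_eq_single_of_mem a (mem_insert_self a s), if_pos (erase_insert ha).symm,
    faceSign_insert_self]
  intro b hb hba
  refine if_neg fun h => ?_
  have : a ∈ (insert a s).erase b := mem_erase.2 ⟨Ne.symm hba, mem_insert_self a s⟩
  exact ha (h ▸ this)

lemma wbdry_erase {b : α} {t : Finset α} (hb : b ∈ t) :
    wbdry x (t.erase b) t = x b * faceSign t b := by
  have h := wbdry_insert x (notMem_erase b t)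
  rwa [← faceSign_insert_self, insert_erase hb] at h

lemma exists_eq_insert_of_wbdry_ne_zero {s t : Finset α} (h : wbdry x s t ≠ 0) :
    ∃ a ∉ s, t = insert a s := by
  obtain ⟨a, ha, hne⟩ := exists_ne_zero_of_sum_ne_zero h
  have hs : s = t.erase a := by by_contra hc; exact hne (if_neg hc)
  exact ⟨a, hs ▸ notMem_erase a t, by rw [hs, insert_erase ha]⟩

lemma wbdry_eq_zero_of_forall_ne {s t : Finset α} (h : ∀ a ∉ s, t ≠ insert a s) :
    wbdry x s t = 0 := by
  by_contra hc
  obtain ⟨a, ha, rfl⟩ := exists_eq_insert_of_wbdry_ne_zero x hc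
  exact h a ha rfl

lemma wbdry_eq_zero_of_not_subset {s t : Finset α} (h : ¬s ⊆ t) : wbdry x s t = 0 :=
  wbdry_eq_zero_of_forall_ne x fun a _ ht => h (ht ▸ subset_insert a s)

lemma wbdry_mul_prod (s t : Finset α) :
    wbdry x s t * ∏ i ∈ s, x i = wbdry 1 s t * ∏ i ∈ t, x i := by
  by_cases h : ∃ a ∉ s, t = insert a s
  · obtain ⟨a, ha, rfl⟩ := h
    rw [wbdry_insert x ha, wbdry_insert 1 ha, prod_insert ha, Pi.one_apply]
    ring
  · push Not at h
    rw [wbdry_eq_zero_of_forall_ne x h, wbdry_eq_zero_of_forall_ne 1 h, zero_mul, zero_mul]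

variable {W : Finset α} {j : ℕ}

lemma sum_mul_wbdry {τ : Finset α} (hτ : τ ∈ W.powersetCard (j + 1)) (f : Finset α → ℝ) :
    ∑ σ ∈ W.powersetCard j, f σ * wbdry x σ τ = ∑ b ∈ τ, f (τ.erase b) * (x b * faceSign τ b) := by
  obtain ⟨hτW, hτc⟩ := mem_powersetCard.1 hτ
  simp only [wbdry, mul_sum, mul_ite, mul_zero]
  rw [sum_comm]
  refine sum_congr rfl fun b hb => ?_
  rw [sum_ite_eq', if_pos]
  refine mem_powersetCard.2 ⟨(erase_subset b τ).trans hτW, ?_⟩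
  rw [card_erase_of_mem hb, hτc, Nat.add_sub_cancel]

lemma sum_wbdry_mul {σ : Finset α} (hσ : σ ∈ W.powersetCard j) (f : Finset α → ℝ) :
    ∑ μ ∈ W.powersetCard (j + 1), wbdry x σ μ * f μ =
      ∑ b ∈ W \ σ, x b * faceSign σ b * f (insert b σ) := by
  obtain ⟨hσW, hσc⟩ := mem_powersetCard.1 hσ
  have hinj : Set.InjOn (insert · σ) (W \ σ : Finset α) := fun b hb c hc h => by
    have := congrArg (fun s => b ∈ s) h
    simp only [mem_insert, true_or, eq_iff_iff, true_iff] at this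
    exact this.resolve_right (mem_sdiff.1 hb).2
  calc ∑ μ ∈ W.powersetCard (j + 1), wbdry x σ μ * f μ
      = ∑ μ ∈ (W \ σ).image (insert · σ), wbdry x σ μ * f μ := by
        refine (sum_subset (fun μ hμ => ?_) fun μ _ hμ => ?_).symm
        · obtain ⟨b, hb, rfl⟩ := mem_image.1 hμ
          obtain ⟨hbW, hbσ⟩ := mem_sdiff.1 hb
          exact mem_powersetCard.2 ⟨insert_subset hbW hσW, by rw [card_insert_of_notMem hbσ, hσc]⟩
        · rw [wbdry_eq_zero_of_forall_ne x fun b hb h => hμ ?_, zero_mul]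
          refine mem_image.2 ⟨b, mem_sdiff.2 ⟨?_, hb⟩, h.symm⟩
          exact (mem_powersetCard.1 ‹μ ∈ _›).1 (h ▸ mem_insert_self b σ)
    _ = ∑ b ∈ W \ σ, x b * faceSign σ b * f (insert b σ) := by
        rw [sum_image hinj]
        exact sum_congr rfl fun b hb => by rw [wbdry_insert x (mem_sdiff.1 hb).2]

lemma sum_wbdry_mul_wbdry {σ μ : Finset α} (hσ : σ ∈ W.powersetCard j) (hμ : μ ⊆ W)
    (hcard : #μ = j + 2) :
    ∑ τ ∈ W.powersetCard (j + 1), wbdry x σ τ * wbdry x τ μ = 0 := by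
  rw [sum_wbdry_mul x hσ]
  have hσc := (mem_powersetCard.1 hσ).2
  by_cases hsub : σ ⊆ μ
  · obtain ⟨b, c, hbc, hbcμ⟩ :
        ∃ b c, b ≠ c ∧ μ \ σ = {b, c} := card_eq_two.1 (by rw [card_sdiff_of_subset hsub]; omega)
    have hbμ : b ∈ μ \ σ := hbcμ ▸ mem_insert_self b {c}
    have hcμ : c ∈ μ \ σ := hbcμ ▸ mem_insert_of_mem (mem_singleton_self c)
    have hbσ := (mem_sdiff.1 hbμ).2
    have hcσ := (mem_sdiff.1 hcμ).2
    have hμ_eq : μ = insert b (insert c σ) := by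
      rw [← sdiff_union_of_subset hsub, hbcμ, insert_union, singleton_union]
    rw [← sum_subset (s₁ := {b, c})]
    · have hb : wbdry x (insert b σ) μ = x c * faceSign (insert b σ) c := by
        rw [hμ_eq, insert_comm]
        exact wbdry_insert x (by simp [hbc.symm, hcσ])
      have hc : wbdry x (insert c σ) μ = x b * faceSign (insert c σ) b := by
        rw [hμ_eq]
        exact wbdry_insert x (by simp [hbc, hbσ])
      rw [sum_pair hbc, hb, hc]
      linear_combination (x b * x c) * faceSign_mul_faceSign_insert_add hbσ hcσ hbc
    · rw [← hbcμ]
      exact sdiff_subset_sdiff hμ le_rfl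
    · intro d hd hdbc
      refine mul_eq_zero_of_right _ (wbdry_eq_zero_of_not_subset x fun h => hdbc ?_)
      rw [← hbcμ]
      exact mem_sdiff.2 ⟨h (mem_insert_self d σ), (mem_sdiff.1 hd).2⟩
  · exact sum_eq_zero fun b _ => mul_eq_zero_of_right _
      (wbdry_eq_zero_of_not_subset x fun h => hsub ((subset_insert b σ).trans h))

lemma sum_wbdry_erase_mul_add_sum_mul_wbdry_insert {τ τ' : Finset α}
    (hτ' : τ' ⊆ W) (hne : τ ≠ τ') :
    ∑ b ∈ τ, wbdry x (τ.erase b) τ' * (x b * faceSign τ b) +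
      ∑ c ∈ W \ τ, x c * faceSign τ c * wbdry x τ' (insert c τ) = 0 := by
  by_cases hex : ∃ b ∈ τ, ∃ c ∉ τ, τ' = insert c (τ.erase b)
  · obtain ⟨b, hb, c, hc, rfl⟩ := hex
    set ρ := τ.erase b
    have hτρ : τ = insert b ρ := (insert_erase hb).symm
    have hbρ : b ∉ ρ := notMem_erase b τ
    have hcρ : c ∉ ρ := fun h => hc (mem_of_mem_erase h)
    have hbc : b ≠ c := fun h => hc (h ▸ hb)
    have hbcρ : b ∉ insert c ρ := by simp [hbc, hbρ]
    rw [sum_eq_single_of_mem b hb, sum_eq_single_of_mem c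
      (mem_sdiff.2 ⟨hτ' (mem_insert_self c ρ), hc⟩)]
    · rw [wbdry_insert x hcρ, hτρ, insert_comm, wbdry_insert x hbcρ, faceSign_insert_self]
      linear_combination (x b * x c) * faceSign_insert_mul_faceSign_insert hbρ hcρ hbc
    · intro c' _ hc'c
      refine mul_eq_zero_of_right _ (wbdry_eq_zero_of_not_subset x fun h => ?_)
      rcases mem_insert.1 (h (mem_insert_self c ρ)) with h' | h'
      · exact hc'c h'.symm
      · exact hc h'
    · intro b' _ hb'b
      refine mul_eq_zero_of_left (wbdry_eq_zero_of_not_subset x fun h => hbcρ ?_) _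
      exact h (mem_erase.2 ⟨fun h' => hb'b h'.symm, hb⟩)
  · push Not at hex
    rw [sum_eq_zero fun b hb => ?_, sum_eq_zero fun c hc => ?_, add_zero]
    · refine mul_eq_zero_of_right _ (wbdry_eq_zero_of_forall_ne x fun b hb h => ?_)
      have hcτ := (mem_sdiff.1 hc).2
      have hbc : b ≠ c := by
        rintro rfl
        exact hne (by rw [← erase_insert hcτ, h, erase_insert hb])
      refine hex b (mem_of_mem_insert_of_ne (h ▸ mem_insert_self b τ') hbc) c hcτ ?_
      calc τ' = (insert b τ').erase b := (erase_insert hb).symm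
        _ = insert c (τ.erase b) := by rw [← h, erase_insert_of_ne hbc.symm]
    · refine mul_eq_zero_of_left (wbdry_eq_zero_of_forall_ne x fun c hc h => ?_) _
      have hcb : c ≠ b := by
        rintro rfl
        exact hne (by rw [h, insert_erase hb])
      exact hex b hb c (fun hcτ => hc (mem_erase.2 ⟨hcb, hcτ⟩)) h

end WeightedBoundary

section SimplexBoundary

variable {α : Type*} [LinearOrder α] (x : α → ℝ) (W : Finset α) (j : ℕ)

noncomputable def simplexBdry : Matrix (W.powersetCard j) (W.powersetCard (j + 1)) ℝ :=
  of fun σ τ => wbdry x σ τ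

theorem simplexBdry_mul_simplexBdry : simplexBdry x W j * simplexBdry x W (j + 1) = 0 := by
  ext σ μ
  obtain ⟨hμW, hμc⟩ := mem_powersetCard.1 μ.2
  simp only [mul_apply, simplexBdry, of_apply, Matrix.zero_apply]
  rw [sum_coe_sort (W.powersetCard (j + 1)) (fun τ => wbdry x σ τ * wbdry x τ μ)]
  exact sum_wbdry_mul_wbdry x σ.2 hμW hμc

theorem transpose_simplexBdry_mul_add_mul_transpose :
    (simplexBdry x W j)ᵀ * simplexBdry x W j +
        simplexBdry x W (j + 1) * (simplexBdry x W (j + 1))ᵀ =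
      (∑ i ∈ W, x i ^ 2) • (1 : Matrix (W.powersetCard (j + 1)) _ ℝ) := by
  ext τ τ'
  simp only [Matrix.add_apply, mul_apply, transpose_apply, simplexBdry, of_apply, Matrix.smul_apply,
    one_apply, smul_eq_mul, mul_ite, mul_one, mul_zero]
  rw [sum_coe_sort (W.powersetCard j) (fun σ => wbdry x σ τ * wbdry x σ τ'),
    sum_coe_sort (W.powersetCard (j + 2)) (fun μ => wbdry x τ μ * wbdry x τ' μ)]
  simp_rw [mul_comm (wbdry x _ τ) (wbdry x _ τ')]
  rw [sum_mul_wbdry x τ.2, sum_wbdry_mul x τ.2]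
  split_ifs with h
  · subst h
    rw [← sum_sdiff (mem_powersetCard.1 τ.2).1, add_comm]
    congr 1
    · refine sum_congr rfl fun c hc => ?_
      rw [wbdry_insert x (mem_sdiff.1 hc).2]
      linear_combination x c ^ 2 * faceSign_mul_self τ.1 c
    · refine sum_congr rfl fun b hb => ?_
      rw [wbdry_erase x hb]
      linear_combination x b ^ 2 * faceSign_mul_self τ.1 b
  · exact sum_wbdry_erase_mul_add_sum_mul_wbdry_insert x (mem_powersetCard.1 τ'.2).1
      fun h' => h (Subtype.ext h')

theorem simplexBdry_mul_transpose_sq :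
    (simplexBdry x W j * (simplexBdry x W j)ᵀ) * (simplexBdry x W j * (simplexBdry x W j)ᵀ) =
      (∑ i ∈ W, x i ^ 2) • (simplexBdry x W j * (simplexBdry x W j)ᵀ) := by
  set D := simplexBdry x W j
  set D' := simplexBdry x W (j + 1)
  have hL : Dᵀ * D = (∑ i ∈ W, x i ^ 2) • 1 - D' * D'ᵀ :=
    eq_sub_of_add_eq (transpose_simplexBdry_mul_add_mul_transpose x W j)
  calc D * Dᵀ * (D * Dᵀ) = D * (Dᵀ * D) * Dᵀ := by simp only [Matrix.mul_assoc]
    _ = (∑ i ∈ W, x i ^ 2) • (D * Dᵀ) - (D * D') * (D * D')ᵀ := by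
      rw [hL, Matrix.mul_sub, Matrix.sub_mul, Matrix.mul_smul, Matrix.mul_one, Matrix.smul_mul,
        transpose_mul]
      simp only [Matrix.mul_assoc]
    _ = (∑ i ∈ W, x i ^ 2) • (D * Dᵀ) := by
      rw [simplexBdry_mul_simplexBdry, Matrix.zero_mul, sub_zero]

theorem trace_simplexBdry_mul_transpose :
    trace (simplexBdry x W j * (simplexBdry x W j)ᵀ) =
      (∑ i ∈ W, x i ^ 2) * (#W - 1).choose j := by
  have hdiag (σ : W.powersetCard j) :
      (simplexBdry x W j * (simplexBdry x W j)ᵀ) σ σ = ∑ b ∈ W \ σ.1, x b ^ 2 := by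
    simp only [mul_apply, transpose_apply, simplexBdry, of_apply]
    rw [sum_coe_sort (W.powersetCard (j + 1)) (fun μ => wbdry x σ μ * wbdry x σ μ),
      sum_wbdry_mul x σ.2]
    refine sum_congr rfl fun b hb => ?_
    rw [wbdry_insert x (mem_sdiff.1 hb).2]
    linear_combination x b ^ 2 * faceSign_mul_self σ.1 b
  simp only [trace, diag_apply, hdiag]
  rw [sum_coe_sort (W.powersetCard j) (fun σ => ∑ b ∈ W \ σ, x b ^ 2),
    sum_sum_eq_sum_nsmul_card_filter fun σ _ => sdiff_subset, sum_mul]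
  refine sum_congr rfl fun b hb => ?_
  rw [nsmul_eq_mul, mul_comm, ← card_filter_notMem_powersetCard W j hb]
  congr 3
  ext σ
  simp [hb]

lemma det_one_add_smul_transpose_simplexBdry_mul_self (c : ℝ) :
    (1 + c • ((simplexBdry x W j)ᵀ * simplexBdry x W j)).det =
      (1 + c * ∑ i ∈ W, x i ^ 2) ^ (#W - 1).choose j := by
  rw [← Matrix.mul_smul, det_one_add_mul_comm, Matrix.smul_mul]
  refine IsHermitian.det_one_add_of_mul_self_eq_smul ?_ ?_ ?_
  · simpa using (isHermitian_mul_conjTranspose_self (simplexBdry x W j)).smul (IsSelfAdjoint.all c)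
  · rw [smul_mul_smul_comm, simplexBdry_mul_transpose_sq, smul_smul, smul_smul]
    congr 1
    ring
  · rw [trace_smul, trace_simplexBdry_mul_transpose, smul_eq_mul, mul_assoc]

end SimplexBoundary

section Cone

variable {α : Type*} [LinearOrder α] (x : α → ℝ) {V : Finset α} {a : α} {j : ℕ}

/-- Row `ρ` of `∂∂ = 0` on the simplex `insert a V`, solved for its only term through `a`. -/
lemma wbdry_insert_eq_sum (ha : a ∉ V) (hxa : x a ≠ 0) {ρ τ : Finset α}
    (hρ : ρ ∈ V.powersetCard j) (hτ : τ ∈ (insert a V).powersetCard (j + 2)) :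
    wbdry x (insert a ρ) τ =
      -(x a * faceSign ρ a)⁻¹ * ∑ σ ∈ V.powersetCard (j + 1), wbdry x ρ σ * wbdry x σ τ := by
  have haρ : a ∉ ρ := fun h => ha ((mem_powersetCard.1 hρ).1 h)
  have h := sum_wbdry_mul_wbdry x (powersetCard_mono (subset_insert a V) hρ)
    (mem_powersetCard.1 hτ).1 (mem_powersetCard.1 hτ).2
  rw [sum_powersetCard_succ_insert ha, sum_eq_single_of_mem ρ hρ, wbdry_insert x haρ] at h
  · have hc : x a * faceSign ρ a ≠ 0 := mul_ne_zero hxa fun h0 => by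
      simpa [h0] using faceSign_mul_self ρ a
    calc wbdry x (insert a ρ) τ
        = (x a * faceSign ρ a)⁻¹ * (x a * faceSign ρ a * wbdry x (insert a ρ) τ) :=
          (inv_mul_cancel_left₀ hc _).symm
      _ = _ := by
          rw [show x a * faceSign ρ a * wbdry x (insert a ρ) τ = -_ from
            eq_neg_of_add_eq_zero_right h]
          ring
  · intro ρ' hρ' hne
    refine mul_eq_zero_of_left (wbdry_eq_zero_of_forall_ne x fun b _ h' => hne ?_) _
    have hab : a = b := by
      have := h' ▸ mem_insert_self a ρ'
      exact (mem_insert.1 this).resolve_right haρ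
    rw [← erase_insert (fun h => ha ((mem_powersetCard.1 hρ').1 h)), h', ← hab, erase_insert haρ]

variable {κ : Type*}

noncomputable def wbdryCols (W : Finset α) (j : ℕ) (g : κ → Finset α) :
    Matrix (W.powersetCard j) κ ℝ :=
  of fun σ t => wbdry x σ (g t)

theorem transpose_wbdryCols_mul_self_insert (ha : a ∉ V) (hxa : x a ≠ 0) {g : κ → Finset α}
    (hg : ∀ t, g t ∈ (insert a V).powersetCard (j + 2)) :
    (wbdryCols x (insert a V) (j + 1) g)ᵀ * wbdryCols x (insert a V) (j + 1) g =
      (wbdryCols x V (j + 1) g)ᵀ *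
        (1 + (x a ^ 2)⁻¹ • ((simplexBdry x V j)ᵀ * simplexBdry x V j)) *
        wbdryCols x V (j + 1) g := by
  set N₀ := wbdryCols x V (j + 1) g
  set D := simplexBdry x V j
  have hrow (ρ : V.powersetCard j) (t : κ) :
      wbdry x (insert a ρ) (g t) = -(x a * faceSign ρ a)⁻¹ * (D * N₀) ρ t := by
    rw [wbdry_insert_eq_sum x ha hxa ρ.2 (hg t), mul_apply]
    simp only [D, N₀, simplexBdry, wbdryCols, of_apply]
    rw [sum_coe_sort (V.powersetCard (j + 1)) fun σ => wbdry x ρ σ * wbdry x σ (g t)]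
  have hc (ρ : V.powersetCard j) :
      -(x a * faceSign ρ a)⁻¹ * -(x a * faceSign ρ a)⁻¹ = (x a ^ 2)⁻¹ := by
    rw [neg_mul_neg, ← mul_inv, mul_mul_mul_comm, faceSign_mul_self, mul_one, sq]
  have hsplit : (D * N₀)ᵀ * (D * N₀) = N₀ᵀ * (Dᵀ * D) * N₀ := by
    rw [transpose_mul]; simp only [Matrix.mul_assoc]
  rw [Matrix.mul_add, Matrix.add_mul, Matrix.mul_one, Matrix.mul_smul, Matrix.smul_mul, ← hsplit]
  set E := D * N₀
  ext t t'
  simp only [Matrix.add_apply, Matrix.smul_apply, smul_eq_mul, mul_apply, transpose_apply,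
    wbdryCols, of_apply, N₀]
  rw [sum_coe_sort ((insert a V).powersetCard (j + 1))
      fun σ => wbdry x σ (g t) * wbdry x σ (g t'),
    sum_powersetCard_succ_insert ha,
    ← sum_coe_sort (V.powersetCard (j + 1)) fun σ => wbdry x σ (g t) * wbdry x σ (g t'),
    ← sum_coe_sort (V.powersetCard j)
      fun ρ => wbdry x (insert a ρ) (g t) * wbdry x (insert a ρ) (g t'), mul_sum]
  congr 1
  refine sum_congr rfl fun ρ _ => ?_
  rw [hrow, hrow, ← hc ρ]
  ring

theorem det_transpose_wbdryCols_mul_self_insert [Fintype κ] [DecidableEq κ] (ha : a ∉ V)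
    (hxa : x a ≠ 0) {g : κ → Finset α} (hg : ∀ t, g t ∈ (insert a V).powersetCard (j + 2))
    (e : V.powersetCard (j + 1) ≃ κ) :
    ((wbdryCols x (insert a V) (j + 1) g)ᵀ * wbdryCols x (insert a V) (j + 1) g).det =
      (1 + (x a ^ 2)⁻¹ * ∑ i ∈ V, x i ^ 2) ^ (#V - 1).choose j *
        ((wbdryCols x V (j + 1) g).submatrix id e).det ^ 2 := by
  rw [transpose_wbdryCols_mul_self_insert x ha hxa hg, det_transpose_mul_mul_self _ _ e,
    det_one_add_smul_transpose_simplexBdry_mul_self]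

theorem trace_transpose_wbdryCols_mul_self [Fintype κ] {W : Finset α} {g : κ → Finset α}
    (hg : ∀ t, g t ∈ W.powersetCard (j + 1)) :
    trace ((wbdryCols x W j g)ᵀ * wbdryCols x W j g) = ∑ t, ∑ b ∈ g t, x b ^ 2 := by
  refine sum_congr rfl fun t _ => ?_
  simp only [diag_apply, mul_apply, transpose_apply, wbdryCols, of_apply]
  rw [sum_coe_sort (W.powersetCard j) fun σ => wbdry x σ (g t) * wbdry x σ (g t),
    sum_mul_wbdry x (hg t)]
  refine sum_congr rfl fun b hb => ?_
  rw [wbdry_erase x hb]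
  linear_combination x b ^ 2 * faceSign_mul_self (g t) b

theorem one_add_mul_pow_mul_det_sq_le [Fintype κ] [DecidableEq κ] (ha : a ∉ V)
    (hxa : x a ≠ 0) {g : κ → Finset α} (hg : ∀ t, g t ∈ (insert a V).powersetCard (j + 2))
    (e : V.powersetCard (j + 1) ≃ κ) :
    (1 + (x a ^ 2)⁻¹ * ∑ i ∈ V, x i ^ 2) ^ (#V - 1).choose j *
        ((wbdryCols x V (j + 1) g).submatrix id e).det ^ 2 ≤
      ((∑ t, ∑ b ∈ g t, x b ^ 2) / Fintype.card κ) ^ Fintype.card κ := by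
  set N := wbdryCols x (insert a V) (j + 1) g
  rw [← det_transpose_wbdryCols_mul_self_insert x ha hxa hg e,
    ← trace_transpose_wbdryCols_mul_self x hg]
  simpa using (posSemidef_conjTranspose_mul_self N).det_le_trace_div_pow

end Cone

lemma detSq_eq_det_submatrix_sq {ι κ : Type*} [Fintype ι] [DecidableEq ι] [Fintype κ]
    [DecidableEq κ] (M : Matrix ι κ ℝ) (e : ι ≃ κ) :
    detSq M = (M.submatrix id e).det ^ 2 := by
  rw [detSq, dif_pos ⟨e⟩]
  set e₀ := (⟨e⟩ : Nonempty (ι ≃ κ)).some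
  have h : M.submatrix id e = (M.submatrix id e₀).submatrix id (e.trans e₀.symm) := by
    ext i j
    simp
  rw [h, det_permute', mul_pow]
  rcases Int.units_eq_one_or (Equiv.Perm.sign (e.trans e₀.symm)) with hs | hs <;> simp [hs]

lemma bdry_apply_eq_wbdry {n k : ℕ} (σ : Face n k) (τ : Face n (k + 1)) :
    bdry n k σ τ = wbdry 1 σ.1 τ.1 := by
  simp [bdry, wbdry, faceSign]

section LastVertex

variable {m : ℕ}

lemma mem_erase_last_iff {a : Fin (m + 1)} :
    a ∈ univ.erase (Fin.last m) ↔ (a : ℕ) < m + 1 - 1 := by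
  rw [mem_erase, Fin.ne_iff_vne, Fin.val_last]
  simp only [mem_univ, and_true]
  omega

def powersetCardEraseLastEquiv (m k : ℕ) :
    (univ.erase (Fin.last m)).powersetCard k ≃ HFace (m + 1) k where
  toFun σ := ⟨σ.1, (mem_powersetCard.1 σ.2).2,
    fun _ ha => mem_erase_last_iff.1 ((mem_powersetCard.1 σ.2).1 ha)⟩
  invFun σ := ⟨σ.1, mem_powersetCard.2 ⟨fun a ha => mem_erase_last_iff.2 (σ.2.2 a ha), σ.2.1⟩⟩
  left_inv _ := rfl
  right_inv _ := rfl

theorem detSq_colSub_bdryHat_mul_prod {j : ℕ} (x : Fin (m + 1) → ℝ)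
    (T : Finset (Face (m + 1) (j + 1 + 1)))
    (e : (univ.erase (Fin.last m)).powersetCard (j + 1) ≃ T) :
    detSq (colSub (bdryHat (m + 1) (j + 1)) T) * ∏ i, (x i ^ 2) ^ deg (m + 1) (j + 1) T i =
      ((wbdryCols x (univ.erase (Fin.last m)) (j + 1) fun t : T => t.1.1).submatrix id e).det ^ 2 *
        ∏ i ∈ univ.erase (Fin.last m), (x i ^ 2) ^ (m - 1).choose j := by
  set E := powersetCardEraseLastEquiv m (j + 1)
  set M := colSub (bdryHat (m + 1) (j + 1)) T
  have hscale := det_mul_prod_eq_of_mul_eq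
    (A := (wbdryCols x (univ.erase (Fin.last m)) (j + 1) fun t : T => t.1.1).submatrix id e)
    (B := (M.submatrix id (E.symm.trans e)).submatrix E E)
    (u := fun σ => ∏ i ∈ σ.1, x i) (v := fun σ => ∏ i ∈ (e σ).1.1, x i) fun σ σ' => by
      simp only [submatrix_apply, wbdryCols, of_apply, id_eq, Equiv.trans_apply,
        Equiv.symm_apply_apply, M, colSub, bdryHat, bdry_apply_eq_wbdry]
      rw [mul_comm, wbdry_mul_prod]
      rfl
  have hu : ∏ σ : (univ.erase (Fin.last m)).powersetCard (j + 1), ∏ i ∈ σ.1, x i =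
      ∏ i ∈ univ.erase (Fin.last m), x i ^ (m - 1).choose j := by
    rw [prod_coe_sort ((univ.erase (Fin.last m)).powersetCard (j + 1)) fun σ => ∏ i ∈ σ, x i,
      prod_prod_eq_prod_pow_card_filter fun σ hσ => (mem_powersetCard.1 hσ).1]
    refine prod_congr rfl fun i hi => ?_
    rw [card_filter_mem_powersetCard _ j hi, card_erase_of_mem (mem_univ _), card_univ,
      Fintype.card_fin, Nat.add_sub_cancel]
  have hv : ∏ σ, ∏ i ∈ (e σ).1.1, x i = ∏ i, x i ^ deg (m + 1) (j + 1) T i := by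
    rw [e.prod_comp fun t : T => ∏ i ∈ t.1.1, x i,
      prod_coe_sort T fun τ => ∏ i ∈ τ.1, x i,
      prod_prod_eq_prod_pow_card_filter fun _ _ => subset_univ _]
    rfl
  rw [det_submatrix_equiv_self, hu, hv] at hscale
  rw [detSq_eq_det_submatrix_sq M (E.symm.trans e)]
  have hsq (s : Finset (Fin (m + 1))) (d : Fin (m + 1) → ℕ) :
      ∏ i ∈ s, (x i ^ 2) ^ d i = (∏ i ∈ s, x i ^ d i) ^ 2 := by
    rw [← prod_pow]
    exact prod_congr rfl fun i _ => pow_right_comm _ _ _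
  rw [hsq, hsq, ← mul_pow, ← mul_pow, hscale]

end LastVertex

lemma le_prod_zpow_mul_inv_mul_of_mul_eq {ι : Type*} [Fintype ι] [DecidableEq ι] {y : ι → ℝ}
    (hy : ∀ i, 0 < y i) (ℓ : ι) (d : ι → ℕ) (r : ℕ) {D G B : ℝ}
    (hD : D * ∏ i, y i ^ d i = G * ∏ i ∈ univ.erase ℓ, y i ^ r)
    (hG : (1 + (y ℓ)⁻¹ * ∑ i ∈ univ.erase ℓ, y i) ^ r * G ≤ B) :
    D ≤ (∏ i, y i ^ ((r : ℤ) - d i)) * ((∑ i, y i) ^ r)⁻¹ * B := by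
  set P := ∏ i, y i ^ d i
  set Q := ∏ i ∈ univ.erase ℓ, y i ^ r
  have hP : 0 < P := prod_pos fun i _ => pow_pos (hy i) _
  have hS : 0 < ∑ i, y i := sum_pos (fun i _ => hy i) ⟨ℓ, mem_univ ℓ⟩
  have hQ : 0 ≤ Q := prod_nonneg fun i _ => (pow_pos (hy i) _).le
  have hzpow : ∏ i, y i ^ ((r : ℤ) - d i) = Q * y ℓ ^ r / P := by
    simp_rw [zpow_sub₀ (hy _).ne', zpow_natCast]
    rw [prod_div_distrib, prod_erase_mul _ _ (mem_univ ℓ)]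
  have hratio : 1 + (y ℓ)⁻¹ * ∑ i ∈ univ.erase ℓ, y i = (∑ i, y i) / y ℓ := by
    rw [← sum_erase_add _ _ (mem_univ ℓ)]
    field_simp [(hy ℓ).ne']
    ring
  rw [hratio, div_pow] at hG
  have hG' : G ≤ B * y ℓ ^ r / (∑ i, y i) ^ r := by
    rw [le_div_iff₀ (pow_pos hS r)]
    rw [div_mul_eq_mul_div, div_le_iff₀ (pow_pos (hy ℓ) r)] at hG
    linarith
  have hD' : D = G * Q / P := by rw [eq_div_iff hP.ne', hD]
  rw [hzpow, hD']
  calc G * Q / P ≤ B * y ℓ ^ r / (∑ i, y i) ^ r * Q / P := by gcongr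
    _ = Q * y ℓ ^ r / P * ((∑ i, y i) ^ r)⁻¹ * B := by ring

theorem amgm_bound_general (n k : ℕ) (hk : 1 ≤ k) (hn : k < n)
    (T : Finset (Face n (k+1))) (hT : T.card = (n-1).choose k)
    (x : Fin n → ℝ) (hx : ∀ i, x i ≠ 0) :
    detSq (colSub (bdryHat n k) T)
      ≤ (∏ i, (x i ^ 2) ^ (((n-2).choose (k-1) : ℤ) - (deg n k T i : ℤ))) *
          ((∑ i, x i ^ 2) ^ ((n-2).choose (k-1)))⁻¹ *
          ((∑ i, (deg n k T i : ℝ) * x i ^ 2) / ((n-1).choose k : ℝ))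
            ^ ((n-1).choose k) := by
  obtain ⟨j, rfl⟩ : ∃ j, k = j + 1 := ⟨k - 1, by omega⟩
  obtain ⟨m, rfl⟩ : ∃ m, n = m + 1 := ⟨n - 1, by omega⟩
  have hV : #(univ.erase (Fin.last m)) = m := by simp
  obtain ⟨e⟩ : Nonempty ((univ.erase (Fin.last m)).powersetCard (j + 1) ≃ T) :=
    Fintype.card_eq.1 (by
      rw [Fintype.card_coe, Fintype.card_coe, card_powersetCard, hV, hT, Nat.add_sub_cancel])
  have hcone := one_add_mul_pow_mul_det_sq_le x (notMem_erase (Fin.last m) univ) (hx _)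
    (g := fun t : T => t.1.1) (fun t => by simp [insert_erase (mem_univ _), t.1.2]) e
  rw [Fintype.card_coe, hT, hV, sum_coe_sort T fun τ => ∑ b ∈ τ.1, x b ^ 2,
    sum_sum_eq_sum_nsmul_card_filter fun _ _ => subset_univ _] at hcone
  simp only [nsmul_eq_mul] at hcone
  conv_rhs => rw [show m + 1 - 2 = m - 1 by omega, Nat.add_sub_cancel, Nat.add_sub_cancel]
  exact le_prod_zpow_mul_inv_mul_of_mul_eq (fun i => sq_pos_of_ne_zero (hx i)) (Fin.last m) _ _
    (detSq_colSub_bdryHat_mul_prod x T e) hcone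

/-- inequality (3), via AM–GM: for a ℚ-acyclic complex `T`
and any `x ∈ ℝⁿ` with nonzero coordinates,
`|H̃_{k−1}(T)|² ≤ (∏ᵢ (xᵢ²)^{m₁−dᵢ}) (Σᵢ xᵢ²)^{−m₁} ((Σᵢ dᵢxᵢ²)/m₃)^{m₃}`. -/
theorem amgm_bound (n k : ℕ) (hk : 1 ≤ k) (hn : k < n)
    (T : Finset (Face n (k+1))) (hT : T.card = (n-1).choose k)
    (hdet : detSq (colSub (bdryHat n k) T) ≠ 0)
    (x : Fin n → ℝ) (hx : ∀ i, x i ≠ 0) :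
    detSq (colSub (bdryHat n k) T)
      ≤ (∏ i, (x i ^ 2) ^ (((n-2).choose (k-1) : ℤ) - (deg n k T i : ℤ))) *
          ((∑ i, x i ^ 2) ^ ((n-2).choose (k-1)))⁻¹ *
          ((∑ i, (deg n k T i : ℝ) * x i ^ 2) / ((n-1).choose k : ℝ))
            ^ ((n-1).choose k) :=
  amgm_bound_general n k hk hn T hT x hx
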